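/- For every N ≥ 1, every K ∈ ℕ, and every pair of starting positions p₁, p₂ ∈ {0,1}^N, the total variation distance between the K-step distributions of the lazy hypercube walk satisfies the lower bound TV(μ_K(p₁), μ_K(p₂)) ≥ ((N−1)/(N+1))^K · |w_H(p₁) − w_H(p₂)|; in particular, when p₁ is the all-zeros vector and p₂ is the all-ones vector, TV(μ_K(p₁), μ_K(p₂)) ≥ ((N−1)/(N+1))^K. -/

import Mathlib

/-! The normalized Hamming weight is an affine eigenfunction of the lazy walk: one step maps its
expectation `m` to `((N - 1) / (N + 1)) * m + 1 / (N + 1)`. Hence the expectations of `wH` under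
the two walks differ by exactly `((N - 1) / (N + 1)) ^ K * (wH p₁ - wH p₂)`, while for any
observable with values in `[0, 1]` the difference of expectations is at most the total variation
distance. -/

open scoped ENNReal

/-- Total variation distance between two distributions: `(1/2) Σ_x |μ(x) − ν(x)|`. -/
noncomputable def tvDist {X : Type*} (μ ν : PMF X) : ℝ≥0∞ :=
  (1 / 2) * ∑' x, max (μ x - ν x) (ν x - μ x)

/-- One step of the lazy hypercube walk on `{0,1}^N`: sample `i` uniformly from `{0,…,N}`;
if `i = 0` stay put, otherwise flip coordinate `i`. -/
noncomputable def hcStep (N : ℕ) (p : Fin N → Bool) : PMF (Fin N → Bool) :=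
  (PMF.uniformOfFintype (Fin (N + 1))).bind fun i =>
    PMF.pure fun j => if (j : ℕ) + 1 = (i : ℕ) then !(p j) else p j

/-- Distribution of the position of the lazy hypercube walk after `K` steps from `p`. -/
noncomputable def hcWalk (N : ℕ) (p : Fin N → Bool) : ℕ → PMF (Fin N → Bool)
  | 0 => PMF.pure p
  | (K + 1) => (hcWalk N p K).bind (hcStep N)

/-- Normalized Hamming weight: the fraction of coordinates equal to `1`. -/
noncomputable def wH {N : ℕ} (q : Fin N → Bool) : ℝ :=
  (1 / (N : ℝ)) * ((Finset.univ.filter fun j => q j = true).card : ℝ)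

open scoped NNReal

namespace PMF

variable {α β : Type*} [Fintype α]

noncomputable def expect (μ : PMF α) (f : α → ℝ) : ℝ :=
  ∑ x, (μ x).toReal * f x

theorem sum_toReal_eq_one (μ : PMF α) : ∑ x, (μ x).toReal = 1 := by
  have h := μ.tsum_coe
  rw [tsum_fintype] at h
  rw [← ENNReal.toReal_sum fun x _ => μ.apply_ne_top x, h, ENNReal.toReal_one]

theorem expect_pure (a : α) (f : α → ℝ) : (pure a).expect f = f a := by
  classical
  simp [expect, pure_apply, apply_ite ENNReal.toReal, ite_mul]

theorem expect_bind [Fintype β] (μ : PMF β) (g : β → PMF α) (f : α → ℝ) :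
    (μ.bind g).expect f = ∑ b, (μ b).toReal * (g b).expect f := by
  have bind_toReal (x : α) : ((μ.bind g) x).toReal = ∑ b, (μ b).toReal * (g b x).toReal := by
    rw [bind_apply, tsum_fintype,
      ENNReal.toReal_sum fun b _ => ENNReal.mul_ne_top (μ.apply_ne_top b) ((g b).apply_ne_top x)]
    simp only [ENNReal.toReal_mul]
  simp only [expect, bind_toReal, Finset.sum_mul, Finset.mul_sum, mul_assoc]
  exact Finset.sum_comm

theorem expect_bind_of_affine [Fintype β] (μ : PMF β) (g : β → PMF α) {f : α → ℝ} {f' : β → ℝ}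
    {c d : ℝ} (h : ∀ b, (g b).expect f = c * f' b + d) :
    (μ.bind g).expect f = c * μ.expect f' + d := by
  calc (μ.bind g).expect f = ∑ b, (c * ((μ b).toReal * f' b) + (μ b).toReal * d) := by
        rw [expect_bind]
        exact Finset.sum_congr rfl fun b _ => by rw [h]; ring
    _ = c * μ.expect f' + d := by
        rw [Finset.sum_add_distrib, ← Finset.mul_sum, ← Finset.sum_mul, sum_toReal_eq_one, one_mul,
          expect]

end PMF

theorem ENNReal.max_tsub_tsub_eq_ofReal_abs {a b : ℝ≥0∞} (ha : a ≠ ∞) (hb : b ≠ ∞) :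
    max (a - b) (b - a) = ENNReal.ofReal |a.toReal - b.toReal| := by
  lift a to ℝ≥0 using ha
  lift b to ℝ≥0 using hb
  rw [← ENNReal.coe_sub, ← ENNReal.coe_sub, ← ENNReal.coe_max, ← NNReal.nndist_eq,
    ← edist_nndist, edist_dist, NNReal.dist_eq]
  rfl

theorem tvDist_eq_ofReal_sum {X : Type*} [Fintype X] (μ ν : PMF X) :
    tvDist μ ν = ENNReal.ofReal (2⁻¹ * ∑ x, |(μ x).toReal - (ν x).toReal|) := by
  rw [tvDist, tsum_fintype, ENNReal.ofReal_mul (by norm_num),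
    ENNReal.ofReal_sum_of_nonneg fun x _ => abs_nonneg _]
  congr 1
  · simp
  · exact Finset.sum_congr rfl fun x _ =>
      ENNReal.max_tsub_tsub_eq_ofReal_abs (μ.apply_ne_top x) (ν.apply_ne_top x)

theorem abs_expect_sub_expect_le_tvDist {X : Type*} [Fintype X] (μ ν : PMF X) {f : X → ℝ}
    (hf₀ : ∀ x, 0 ≤ f x) (hf₁ : ∀ x, f x ≤ 1) :
    ENNReal.ofReal |μ.expect f - ν.expect f| ≤ tvDist μ ν := by
  rw [tvDist_eq_ofReal_sum]
  refine ENNReal.ofReal_le_ofReal ?_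
  set d : X → ℝ := fun x => (μ x).toReal - (ν x).toReal
  -- the masses `d x` sum to zero, so `f` may be centred at `1/2`, where `|f - 1/2| ≤ 1/2`
  have centred : μ.expect f - ν.expect f = ∑ x, d x * (f x - 2⁻¹) := by
    simp only [PMF.expect, d, mul_sub, sub_mul, Finset.sum_sub_distrib, ← Finset.sum_mul,
      PMF.sum_toReal_eq_one]
    ring
  calc |μ.expect f - ν.expect f| ≤ ∑ x, |d x| * |f x - 2⁻¹| := by
        rw [centred]
        simpa only [abs_mul] using Finset.abs_sum_le_sum_abs (fun x => d x * (f x - 2⁻¹)) _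
    _ ≤ ∑ x, |d x| * 2⁻¹ := by
        gcongr with x
        exact abs_le.mpr ⟨by linarith [hf₀ x], by linarith [hf₁ x]⟩
    _ = 2⁻¹ * ∑ x, |d x| := by rw [← Finset.sum_mul, mul_comm]

section Hypercube

variable {N : ℕ}

theorem wH_eq_sum_div (q : Fin N → Bool) : wH q = (∑ j, if q j then (1 : ℝ) else 0) / N := by
  rw [wH, Finset.card_filter]
  push_cast
  simp [div_eq_inv_mul]

theorem wH_nonneg (q : Fin N → Bool) : 0 ≤ wH q := by
  unfold wH
  positivity

theorem wH_le_one (q : Fin N → Bool) : wH q ≤ 1 := by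
  rw [wH_eq_sum_div]
  refine div_le_one_of_le₀ ?_ N.cast_nonneg
  calc (∑ j, if q j then (1 : ℝ) else 0) ≤ ∑ _j : Fin N, (1 : ℝ) := by
        gcongr with j
        split <;> norm_num
    _ = N := by simp

theorem sum_wH_flip (hN : 1 ≤ N) (p : Fin N → Bool) :
    ∑ i : Fin (N + 1), wH (fun j : Fin N => if (j : ℕ) + 1 = i then !p j else p j)
      = (N - 1) * wH p + 1 := by
  have sum_coord_flip (j : Fin N) :
      ∑ i : Fin (N + 1), (if (if (j : ℕ) + 1 = i then !p j else p j) then (1 : ℝ) else 0)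
        = 1 + (N - 1) * (if p j then 1 else 0) := by
    rw [Fin.sum_univ_succ]
    simp only [Fin.val_zero, Fin.val_succ, Nat.add_right_cancel_iff, Fin.val_inj,
      Nat.add_one_ne_zero, if_false]
    cases p j <;> simp [Finset.sum_ite, Finset.filter_ne, Nat.cast_pred j.pos]
  have hN0 : (N : ℝ) ≠ 0 := by positivity
  simp only [wH_eq_sum_div, ← Finset.sum_div]
  rw [Finset.sum_comm]
  simp only [sum_coord_flip, Finset.sum_add_distrib, ← Finset.mul_sum, Finset.sum_const,
    Finset.card_univ, Fintype.card_fin, nsmul_eq_mul, mul_one]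
  field_simp
  ring

theorem expect_hcStep_wH (hN : 1 ≤ N) (p : Fin N → Bool) :
    (hcStep N p).expect wH = (N - 1) / (N + 1) * wH p + 1 / (N + 1) := by
  rw [hcStep, PMF.expect_bind]
  simp only [PMF.expect_pure, PMF.uniformOfFintype_apply, Fintype.card_fin, ← Finset.mul_sum,
    sum_wH_flip hN, ENNReal.toReal_inv, ENNReal.toReal_natCast]
  push_cast
  ring

theorem expect_hcWalk_wH_sub (hN : 1 ≤ N) (p₁ p₂ : Fin N → Bool) (K : ℕ) :
    (hcWalk N p₁ K).expect wH - (hcWalk N p₂ K).expect wH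
      = ((N - 1) / (N + 1)) ^ K * (wH p₁ - wH p₂) := by
  induction K with
  | zero => simp [hcWalk, PMF.expect_pure]
  | succ K ih =>
    simp only [hcWalk, PMF.expect_bind_of_affine _ _ (expect_hcStep_wH hN), pow_succ]
    linear_combination (N - 1) / (N + 1) * ih

end Hypercube

/-- **TV lower bound for the lazy hypercube walk.** For `N ≥ 1` and any `K`:
`TV(μ_K(p₁), μ_K(p₂)) ≥ ((N−1)/(N+1))^K · |w_H(p₁) − w_H(p₂)|` for all start positions, and in
particular the walks started from the all-zeros and all-ones vectors are at TV distance at least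
`((N−1)/(N+1))^K`. -/
theorem hcWalk_tv_lower (N K : ℕ) (hN : 1 ≤ N) :
    (∀ p₁ p₂ : Fin N → Bool,
      ENNReal.ofReal ((((N : ℝ) - 1) / ((N : ℝ) + 1)) ^ K * |wH p₁ - wH p₂|)
        ≤ tvDist (hcWalk N p₁ K) (hcWalk N p₂ K)) ∧
    ENNReal.ofReal ((((N : ℝ) - 1) / ((N : ℝ) + 1)) ^ K)
      ≤ tvDist (hcWalk N (fun _ => false) K) (hcWalk N (fun _ => true) K) := by
  have rate_nonneg : 0 ≤ ((N : ℝ) - 1) / (N + 1) := by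
    have : (1 : ℝ) ≤ N := by exact_mod_cast hN
    positivity
  have bound (p₁ p₂ : Fin N → Bool) :
      ENNReal.ofReal ((((N : ℝ) - 1) / ((N : ℝ) + 1)) ^ K * |wH p₁ - wH p₂|)
        ≤ tvDist (hcWalk N p₁ K) (hcWalk N p₂ K) := by
    have h := abs_expect_sub_expect_le_tvDist (hcWalk N p₁ K) (hcWalk N p₂ K) wH_nonneg wH_le_one
    rwa [expect_hcWalk_wH_sub hN, abs_mul, abs_of_nonneg (pow_nonneg rate_nonneg K)] at h
  refine ⟨bound, ?_⟩
  have hN0 : (N : ℝ) ≠ 0 := by positivity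
  simpa [wH_eq_sum_div, hN0] using bound (fun _ => false) (fun _ => true)
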